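/- arXiv:2310.18055 — 8 statements merged into one kernel-verified Lean document; each statement's English description precedes it below -/
import Mathlib

section
/- Let a : ℤ≥0 → ℝ with inf a_k > 0 and sup a_k < ∞, and define p_x(z) = ∏_{k=0}^{x−1}(1 − z/a_k). For α with 0 ≤ α ≤ (sup_k a_k)^{-1} and f(z) = 1 − αz, the contour integral T_f(x,y) = −(1/(2πi a_y)) ∮_{C_a} p_x(w) f(w)/p_{y+1}(w) dw, taken over a positively oriented contour C_a encircling all points a_k, equals α a_x if y = x+1, equals 1 − α a_x if y = x, and equals 0 otherwise. -/
open Metric circleIntegral in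
private lemma auxZ_ne {c z b : ℂ} {R : ℝ} (hb : b ∈ Metric.ball c R)
    (hz : z ∈ Metric.sphere c R) : z - b ≠ 0 := by
  rw [mem_ball] at hb
  rw [mem_sphere] at hz
  intro h
  rw [sub_eq_zero] at h
  subst h
  exact absurd hz (ne_of_lt hb)

private lemma auxZ_cont (M : Multiset ℂ) :
    Continuous fun z => (M.map fun b => z - b).prod :=
  continuous_multiset_prod M (fun b _ => continuous_id.sub continuous_const)

open Metric in
private lemma auxZ_prod_ne {c : ℂ} {R : ℝ} (M : Multiset ℂ)
    (hM : ∀ b ∈ M, b ∈ Metric.ball c R) {z : ℂ} (hz : z ∈ Metric.sphere c R) :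
    (M.map fun b => z - b).prod ≠ 0 := by
  refine Multiset.prod_ne_zero ?_
  intro h0
  rw [Multiset.mem_map] at h0
  obtain ⟨b, hb, hb0⟩ := h0
  exact auxZ_ne (hM b hb) hz hb0

open Metric in
private lemma auxZ_integrable {c : ℂ} {R : ℝ} (hR : 0 ≤ R) (M : Multiset ℂ)
    (hM : ∀ b ∈ M, b ∈ Metric.ball c R) :
    CircleIntegrable (fun z => ((M.map fun b => z - b).prod)⁻¹) c R :=
  ContinuousOn.circleIntegrable hR <|
    ((auxZ_cont M).continuousOn).inv₀ fun z hz => auxZ_prod_ne M hM hz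

open Metric circleIntegral in
private lemma auxZ_one {c : ℂ} {R : ℝ} : (∮ _z in C(c, R), (1 : ℂ)) = 0 := by
  have h : (fun _z : ℂ => (1 : ℂ)) = fun z => (z - c) ^ (0 : ℤ) := by
    funext z; simp
  rw [h]
  exact integral_sub_zpow_of_ne (by norm_num) _ _ _

open Metric circleIntegral in
/-- Sum of residues of `1/∏(z - bᵢ)` with at least two poles (counted with
multiplicity) inside the circle is zero. -/
private lemma auxZ (c : ℂ) (R : ℝ) (hR : 0 < R) :
    ∀ (n : ℕ) (M : Multiset ℂ), Multiset.card M = n →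
      (∀ b ∈ M, b ∈ Metric.ball c R) → 2 ≤ n →
      (∮ z in C(c, R), ((M.map fun b => z - b).prod)⁻¹) = 0 := by
  intro n
  induction n using Nat.strong_induction_on with
  | _ n IH =>
    intro M hcard hmem hn
    -- pick an element b₁
    have hpos : 0 < Multiset.card M := by omega
    obtain ⟨b₁, hb₁⟩ := Multiset.card_pos_iff_exists_mem.mp hpos
    by_cases hall : ∀ b ∈ M, b = b₁
    · -- all poles equal: integrand is (z - b₁)^(-n)
      have hrep : M = Multiset.replicate n b₁ := by
        rw [← hcard]; exact Multiset.eq_replicate_card.mpr hall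
      have h : (fun z => ((M.map fun b => z - b).prod)⁻¹) =
          fun z => (z - b₁) ^ (-(n : ℤ)) := by
        funext z
        rw [hrep, Multiset.map_replicate, Multiset.prod_replicate, zpow_neg,
          zpow_natCast]
      rw [h]
      exact integral_sub_zpow_of_ne (by omega) _ _ _
    · push_neg at hall
      obtain ⟨b₂, hb₂, hne⟩ := hall
      set M' : Multiset ℂ := (M.erase b₁).erase b₂ with hM'
      have hb₂' : b₂ ∈ M.erase b₁ := Multiset.mem_erase_of_ne hne |>.mpr hb₂
      have hMeq : M = b₁ ::ₘ b₂ ::ₘ M' := by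
        rw [hM', Multiset.cons_erase hb₂', Multiset.cons_erase hb₁]
      have hmem' : ∀ b ∈ M', b ∈ Metric.ball c R := fun b hb =>
        hmem b (by rw [hMeq]; exact Multiset.mem_cons_of_mem (Multiset.mem_cons_of_mem hb))
      have hmem1 : ∀ b ∈ b₁ ::ₘ M', b ∈ Metric.ball c R := by
        intro b hb
        rcases Multiset.mem_cons.mp hb with h | h
        · subst h; exact hmem _ hb₁
        · exact hmem' _ h
      have hmem2 : ∀ b ∈ b₂ ::ₘ M', b ∈ Metric.ball c R := by
        intro b hb
        rcases Multiset.mem_cons.mp hb with h | h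
        · subst h; exact hmem _ hb₂
        · exact hmem' _ h
      have hcard' : Multiset.card M' + 2 = n := by
        have := congrArg Multiset.card hMeq
        simp at this; omega
      have hb12 : b₁ - b₂ ≠ 0 := sub_ne_zero.mpr hne.symm
      -- partial fractions splitting
      have heq : Set.EqOn (fun z => ((M.map fun b => z - b).prod)⁻¹)
          (fun z => (b₁ - b₂)⁻¹ * (((b₁ ::ₘ M').map fun b => z - b).prod)⁻¹ -
            (b₁ - b₂)⁻¹ * (((b₂ ::ₘ M').map fun b => z - b).prod)⁻¹)
          (Metric.sphere c R) := by
        intro z hz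
        have hq : (M'.map fun b => z - b).prod ≠ 0 := auxZ_prod_ne M' hmem' hz
        have h1 : z - b₁ ≠ 0 := auxZ_ne (hmem _ hb₁) hz
        have h2 : z - b₂ ≠ 0 := auxZ_ne (hmem _ hb₂) hz
        simp only [hMeq, Multiset.map_cons, Multiset.prod_cons]
        field_simp
        ring
      rw [circleIntegral.integral_congr hR.le heq]
      have int1 : CircleIntegrable
          (fun z => (b₁ - b₂)⁻¹ * (((b₁ ::ₘ M').map fun b => z - b).prod)⁻¹) c R :=
        (auxZ_integrable hR.le _ hmem1).const_mul _
      have int2 : CircleIntegrable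
          (fun z => (b₁ - b₂)⁻¹ * (((b₂ ::ₘ M').map fun b => z - b).prod)⁻¹) c R :=
        (auxZ_integrable hR.le _ hmem2).const_mul _
      rw [circleIntegral.integral_sub int1 int2, circleIntegral.integral_const_mul,
        circleIntegral.integral_const_mul]
      rcases Nat.eq_zero_or_pos (Multiset.card M') with h0 | hpos'
      · -- n = 2 : both integrals are 2πi
        rw [Multiset.card_eq_zero.mp h0]
        have e1 : (fun z => (((b₁ ::ₘ (0 : Multiset ℂ)).map fun b => z - b).prod)⁻¹) =
            fun z => (z - b₁)⁻¹ := by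
          funext z; simp
        have e2 : (fun z => (((b₂ ::ₘ (0 : Multiset ℂ)).map fun b => z - b).prod)⁻¹) =
            fun z => (z - b₂)⁻¹ := by
          funext z; simp
        rw [e1, e2, integral_sub_inv_of_mem_ball (hmem _ hb₁),
          integral_sub_inv_of_mem_ball (hmem _ hb₂)]
        ring
      · -- n ≥ 3 : both integrals vanish by induction
        rw [IH (n - 1) (by omega) (b₁ ::ₘ M') (by simp; omega) hmem1 (by omega),
          IH (n - 1) (by omega) (b₂ ::ₘ M') (by simp; omega) hmem2 (by omega)]
        ring

/-- The inhomogeneous Toeplitz-like kernel with symbol `f(z) = 1 - α z` is the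
transition kernel of an inhomogeneous Bernoulli walk. -/
theorem stmt1 (a : ℕ → ℝ) (hpos : ∀ k, 0 < a k) (hinf : 0 < ⨅ k, a k)
    (hbdd : BddAbove (Set.range a))
    (α : ℝ) (hα0 : 0 ≤ α) (hα1 : α ≤ (⨆ k, a k)⁻¹)
    (x y : ℕ) (c : ℂ) (R : ℝ) (hR : ∀ k, ‖(a k : ℂ) - c‖ < R) :
    -(1 / (2 * (Real.pi : ℂ) * Complex.I * (a y : ℂ))) *
        (∮ w in C(c, R),
          ((∏ k ∈ Finset.range x, (1 - w / (a k : ℂ))) * (1 - (α : ℂ) * w) /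
            (∏ k ∈ Finset.range (y + 1), (1 - w / (a k : ℂ)))))
      = if y = x + 1 then ((α * a x : ℝ) : ℂ)
        else if y = x then ((1 - α * a x : ℝ) : ℂ) else 0 := by
  have hR0 : 0 < R := (norm_nonneg _).trans_lt (hR 0)
  have haC : ∀ k, (a k : ℂ) ≠ 0 := fun k => by exact_mod_cast (hpos k).ne'
  have hball : ∀ k, (a k : ℂ) ∈ Metric.ball c R := fun k => by
    rw [Metric.mem_ball, Complex.dist_eq]; exact hR k
  have h2pi : (2 : ℂ) * (Real.pi : ℂ) * Complex.I ≠ 0 := by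
    simp [Real.pi_ne_zero, Complex.I_ne_zero]
  have hfac : ∀ k, ∀ z ∈ Metric.sphere c R, (1 : ℂ) - z / (a k : ℂ) ≠ 0 := by
    intro k z hz
    have h1 : z - (a k : ℂ) ≠ 0 := auxZ_ne (hball k) hz
    have h2 := haC k
    intro h
    apply h1
    have h3 : z / (a k : ℂ) = 1 := by linear_combination -h
    rw [div_eq_one_iff_eq h2] at h3
    rw [h3, sub_self]
  by_cases hxy : x ≤ y
  · -- main case: simplify to multiset form
    set M : Multiset ℂ := ((Finset.Ico x (y + 1)).val.map fun k => (a k : ℂ)) with hM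
    set E : ℂ := ∏ k ∈ Finset.Ico x (y + 1), (-(a k : ℂ)) with hE
    have hxs : x ∈ Finset.Ico x (y + 1) := by simp [Finset.mem_Ico]; omega
    have haxM : (a x : ℂ) ∈ M := by
      rw [hM]; exact Multiset.mem_map_of_mem _ hxs
    set M₀ : Multiset ℂ := M.erase (a x : ℂ) with hM₀
    have hMc : M = (a x : ℂ) ::ₘ M₀ := (Multiset.cons_erase haxM).symm
    have hmemM : ∀ b ∈ M, b ∈ Metric.ball c R := by
      intro b hb
      rw [hM, Multiset.mem_map] at hb
      obtain ⟨k, _, rfl⟩ := hb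
      exact hball k
    have hmemM₀ : ∀ b ∈ M₀, b ∈ Metric.ball c R := fun b hb =>
      hmemM b (Multiset.mem_of_mem_erase hb)
    have hcardM : Multiset.card M = y + 1 - x := by
      rw [hM, Multiset.card_map]; simp
    have hcardM₀ : Multiset.card M₀ = y - x := by
      rw [hM₀, Multiset.card_erase_of_mem haxM, hcardM, Nat.pred_eq_sub_one]; omega
    have hEne : E ≠ 0 :=
      Finset.prod_ne_zero_iff.mpr fun k _ => neg_ne_zero.mpr (haC k)
    have heq : Set.EqOn
        (fun z => (∏ k ∈ Finset.range x, (1 - z / (a k : ℂ))) * (1 - (α : ℂ) * z) /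
          (∏ k ∈ Finset.range (y + 1), (1 - z / (a k : ℂ))))
        (fun z => (E * (1 - (α : ℂ) * (a x : ℂ))) * ((M.map fun b => z - b).prod)⁻¹ -
          (E * (α : ℂ)) * ((M₀.map fun b => z - b).prod)⁻¹)
        (Metric.sphere c R) := by
      intro z hz
      have hA : (∏ k ∈ Finset.range x, (1 - z / (a k : ℂ))) ≠ 0 :=
        Finset.prod_ne_zero_iff.mpr fun k _ => hfac k z hz
      have hq : (M₀.map fun b => z - b).prod ≠ 0 := auxZ_prod_ne M₀ hmemM₀ hz
      have hp : z - (a x : ℂ) ≠ 0 := auxZ_ne (hball x) hz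
      have hsplit : (∏ k ∈ Finset.range (y + 1), (1 - z / (a k : ℂ))) =
          (∏ k ∈ Finset.range x, (1 - z / (a k : ℂ))) *
            ∏ k ∈ Finset.Ico x (y + 1), (1 - z / (a k : ℂ)) :=
        (Finset.prod_range_mul_prod_Ico _ (by omega)).symm
      have hQ : (∏ k ∈ Finset.Ico x (y + 1), (1 - z / (a k : ℂ))) =
          (∏ k ∈ Finset.Ico x (y + 1), (z - (a k : ℂ))) / E := by
        rw [hE, ← Finset.prod_div_distrib]
        refine Finset.prod_congr rfl fun k _ => ?_
        have h2 := haC k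
        rw [div_neg, ← neg_div, neg_sub, sub_div, div_self h2]
      have hprodM : (∏ k ∈ Finset.Ico x (y + 1), (z - (a k : ℂ))) =
          (M.map fun b => z - b).prod := by
        rw [hM, Multiset.map_map]; rfl
      have hMz : (M.map fun b => z - b).prod =
          (z - (a x : ℂ)) * (M₀.map fun b => z - b).prod := by
        rw [hMc, Multiset.map_cons, Multiset.prod_cons]
      simp only
      rw [hsplit, hQ, hprodM, hMz]
      field_simp
      ring
    rw [circleIntegral.integral_congr hR0.le heq]
    have int1 : CircleIntegrable
        (fun z => (E * (1 - (α : ℂ) * (a x : ℂ))) * ((M.map fun b => z - b).prod)⁻¹) c R :=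
      (auxZ_integrable hR0.le _ hmemM).const_mul _
    have int2 : CircleIntegrable
        (fun z => (E * (α : ℂ)) * ((M₀.map fun b => z - b).prod)⁻¹) c R :=
      (auxZ_integrable hR0.le _ hmemM₀).const_mul _
    rw [circleIntegral.integral_sub int1 int2, circleIntegral.integral_const_mul,
      circleIntegral.integral_const_mul]
    by_cases hy1 : y = x + 1
    · subst hy1
      have hZ1 : (∮ z in C(c, R), ((M.map fun b => z - b).prod)⁻¹) = 0 :=
        auxZ c R hR0 (Multiset.card M) M rfl hmemM (by omega)
      obtain ⟨b, hb⟩ := Multiset.card_eq_one.mp (hcardM₀.trans (by omega))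
      have hbball : b ∈ Metric.ball c R := hmemM₀ b (by rw [hb]; exact Multiset.mem_singleton_self b)
      have e2 : (fun z => ((M₀.map fun b => z - b).prod)⁻¹) = fun z => (z - b)⁻¹ := by
        funext z; rw [hb]; simp
      rw [hZ1, e2, circleIntegral.integral_sub_inv_of_mem_ball hbball]
      have hsxx : Finset.Ico x (x + 1 + 1) = {x, x + 1} := by
        ext k; simp only [Finset.mem_Ico, Finset.mem_singleton, Finset.mem_insert]; omega
      have hEval : E = (a x : ℂ) * (a (x + 1) : ℂ) := by
        rw [hE, hsxx, Finset.prod_pair (by omega : x ≠ x + 1)]; ring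
      rw [if_pos rfl, hEval]
      have hax1 := haC (x + 1)
      have hax := haC x
      have hπ : (Real.pi : ℂ) ≠ 0 := Complex.ofReal_ne_zero.mpr Real.pi_ne_zero
      have hI := Complex.I_ne_zero
      push_cast
      field_simp
      ring
    · by_cases hy0 : y = x
      · subst hy0
        have hM0z : M₀ = 0 := Multiset.card_eq_zero.mp (hcardM₀.trans (by omega))
        have hsx : Finset.Ico y (y + 1) = {y} := by
          ext k; simp only [Finset.mem_Ico, Finset.mem_singleton]; omega
        have hMsing : M = {(a y : ℂ)} := by rw [hMc, hM0z]; rfl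
        have e1 : (fun z => ((M.map fun b => z - b).prod)⁻¹) =
            fun z => (z - (a y : ℂ))⁻¹ := by
          funext z; rw [hMsing]; simp
        have e2 : (fun z => ((M₀.map fun b => z - b).prod)⁻¹) = fun _z => (1 : ℂ) := by
          funext z; rw [hM0z]; simp
        rw [e1, e2, circleIntegral.integral_sub_inv_of_mem_ball (hball y), auxZ_one]
        have hEval : E = -(a y : ℂ) := by rw [hE, hsx, Finset.prod_singleton]
        rw [if_neg (by omega), if_pos rfl, hEval]
        have hax := haC y
        have hπ : (Real.pi : ℂ) ≠ 0 := Complex.ofReal_ne_zero.mpr Real.pi_ne_zero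
        have hI := Complex.I_ne_zero
        push_cast
        field_simp
        ring
      · -- y ≥ x + 2 : everything vanishes
        have hZ1 : (∮ z in C(c, R), ((M.map fun b => z - b).prod)⁻¹) = 0 :=
          auxZ c R hR0 (Multiset.card M) M rfl hmemM (by omega)
        have hZ2 : (∮ z in C(c, R), ((M₀.map fun b => z - b).prod)⁻¹) = 0 :=
          auxZ c R hR0 (Multiset.card M₀) M₀ rfl hmemM₀ (by omega)
        rw [hZ1, hZ2, if_neg hy1, if_neg hy0]
        ring
  · -- y < x : the integrand is a polynomial, integral vanishes
    push_neg at hxy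
    have hsub : Finset.range (y + 1) ⊆ Finset.range x := by
      intro k hk; simp only [Finset.mem_range] at *; omega
    have heq : Set.EqOn
        (fun z => (∏ k ∈ Finset.range x, (1 - z / (a k : ℂ))) * (1 - (α : ℂ) * z) /
          (∏ k ∈ Finset.range (y + 1), (1 - z / (a k : ℂ))))
        (fun z => (∏ k ∈ Finset.range x \ Finset.range (y + 1), (1 - z / (a k : ℂ))) *
          (1 - (α : ℂ) * z))
        (Metric.sphere c R) := by
      intro z hz
      have hd : (∏ k ∈ Finset.range (y + 1), (1 - z / (a k : ℂ))) ≠ 0 :=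
        Finset.prod_ne_zero_iff.mpr fun k _ => hfac k z hz
      simp only
      rw [← Finset.prod_sdiff hsub]
      field_simp
    rw [circleIntegral.integral_congr hR0.le heq]
    have hzero : (∮ z in C(c, R),
        ((∏ k ∈ Finset.range x \ Finset.range (y + 1), (1 - z / (a k : ℂ))) *
          (1 - (α : ℂ) * z))) = 0 := by
      refine Complex.circleIntegral_eq_zero_of_differentiable_on_off_countable hR0.le
        Set.countable_empty ?_ ?_
      · exact ((continuous_finset_prod _ fun k _ =>
          continuous_const.sub (continuous_id.div_const _)).mul
          (continuous_const.sub (continuous_const.mul continuous_id))).continuousOn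
      · intro z _
        exact ((DifferentiableAt.fun_finsetProd fun k _ =>
          (differentiableAt_const _).sub (differentiableAt_id.div_const _)).mul
          ((differentiableAt_const _).sub ((differentiableAt_const _).mul differentiableAt_id)))
    rw [hzero, if_neg (by omega), if_neg (by omega)]
    ring
end

section
/- Let a_0,…,a_n be distinct positive reals and β ≥ 0. Then ∑_{k=0}^{n} (∏_{j≠k} 1/(a_j − a_k)) · 1/(1 + β a_k) = β^n ∏_{k=0}^{n} 1/(1 + β a_k). -/
/-!
The coefficient `∏ j ≠ k, (a j - a k)⁻¹` is the nodal weight `w k` of the nodes `-a k`, so for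
`β ≠ 0` the identity is the partial fraction decomposition
`1 / ∏ k, (x + a k) = ∑ k, w k / (x + a k)` at `x = β⁻¹`, rescaled by `β`. For `β = 0` it says
`∑ k, w k = 0 ^ n`, which is the coefficient of `X ^ n` in the Lagrange interpolant of `1`.
-/

open Finset Polynomial

namespace Lagrange

variable {F ι : Type*} [Field F] [DecidableEq ι] {s : Finset ι} {v : ι → F}

theorem sum_nodalWeight (hvs : Set.InjOn v s) (hs : s.Nonempty) :
    ∑ i ∈ s, nodalWeight s v i = 0 ^ (#s - 1) := by
  have hdeg : (1 : F[X]).degree < #s := by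
    rw [degree_one]
    exact_mod_cast hs.card_pos
  have := coeff_eq_sum hvs hdeg
  simp only [coeff_one, eval_one, one_div] at this
  simp only [nodalWeight, prod_inv_distrib, ← this, zero_pow_eq]

theorem sum_nodalWeight_mul_inv_sub (hvs : Set.InjOn v s) (hs : s.Nonempty) {x : F}
    (hx : ∀ i ∈ s, x ≠ v i) :
    ∑ i ∈ s, nodalWeight s v i * (x - v i)⁻¹ = (∏ i ∈ s, (x - v i))⁻¹ := by
  have := eval_interpolate_not_at_node (1 : ι → F) hx
  rw [interpolate_one hvs hs, eval_one, eval_nodal] at this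
  simp only [Pi.one_apply, mul_one] at this
  exact eq_inv_of_mul_eq_one_right this.symm

end Lagrange

open Lagrange in
theorem sum_prod_inv_sub_mul_inv_one_add_mul {F ι : Type*} [Field F] [DecidableEq ι]
    {s : Finset ι} {a : ι → F} (hs : s.Nonempty) (ha : Set.InjOn a s) {β : F}
    (hβ : ∀ k ∈ s, 1 + β * a k ≠ 0) :
    ∑ k ∈ s, (∏ j ∈ s.erase k, (a j - a k)⁻¹) * (1 + β * a k)⁻¹
      = β ^ (#s - 1) * ∏ k ∈ s, (1 + β * a k)⁻¹ := by
  have hweight : ∀ k, ∏ j ∈ s.erase k, (a j - a k)⁻¹ = nodalWeight s (-a) k := fun k => by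
    simp only [nodalWeight, Pi.neg_apply, neg_sub_neg]
  have hinj : Set.InjOn (-a) s := neg_injective.comp_injOn ha
  simp_rw [hweight]
  rcases eq_or_ne β 0 with rfl | hβ0
  · simp only [zero_mul, add_zero, inv_one, mul_one, prod_const_one]
    exact sum_nodalWeight hinj hs
  have hfactor : ∀ k, β⁻¹ - (-a) k = β⁻¹ * (1 + β * a k) := fun k => by
    field_simp
    simp only [Pi.neg_apply]
    ring
  have hx : ∀ k ∈ s, β⁻¹ ≠ (-a) k := fun k hk => sub_ne_zero.mp <| by
    rw [hfactor]
    exact mul_ne_zero (inv_ne_zero hβ0) (hβ k hk)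
  obtain ⟨n, hn⟩ : ∃ n, #s = n + 1 := Nat.exists_eq_add_one.mpr hs.card_pos
  calc ∑ k ∈ s, nodalWeight s (-a) k * (1 + β * a k)⁻¹
      = β⁻¹ * ∑ k ∈ s, nodalWeight s (-a) k * (β⁻¹ - (-a) k)⁻¹ := by
        simp_rw [mul_sum, hfactor, mul_inv, inv_inv]
        refine sum_congr rfl fun k _ => ?_
        field_simp
    _ = β⁻¹ * ∏ k ∈ s, (β * (1 + β * a k)⁻¹) := by
        rw [sum_nodalWeight_mul_inv_sub hinj hs hx, ← prod_inv_distrib]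
        simp_rw [hfactor, mul_inv, inv_inv]
    _ = β ^ (#s - 1) * ∏ k ∈ s, (1 + β * a k)⁻¹ := by
        rw [prod_mul_distrib, prod_const, hn, pow_succ, Nat.add_sub_cancel]
        field_simp

/-- The key residue identity for the inhomogeneous geometric kernel. -/
theorem stmt2 (n : ℕ) (a : ℕ → ℝ) (hpos : ∀ k ≤ n, 0 < a k)
    (hdist : ∀ j ≤ n, ∀ k ≤ n, j ≠ k → a j ≠ a k) (β : ℝ) (hβ : 0 ≤ β) :
    ∑ k ∈ Finset.range (n + 1),
        (∏ j ∈ (Finset.range (n + 1)).erase k, (a j - a k)⁻¹) * (1 + β * a k)⁻¹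
      = β ^ n * ∏ k ∈ Finset.range (n + 1), (1 + β * a k)⁻¹ := by
  have hmem : ∀ {k}, k ∈ range (n + 1) → k ≤ n := fun hk => Nat.lt_succ_iff.mp (mem_range.mp hk)
  have h := sum_prod_inv_sub_mul_inv_one_add_mul (nonempty_range_add_one (n := n))
    (fun j hj k hk hjk => by_contra fun hne => hdist j (hmem hj) k (hmem hk) hne hjk)
    (fun k hk => by have := hpos k (hmem hk); positivity)
  rwa [card_range, Nat.add_sub_cancel] at h
end

section
/- Let N ≥ 1, let a : ℤ≥0 → (0,∞), and for x,y ∈ ℤ≥0 let ψ_r(x,y) = a_y^{-1} 1_{x≤y}, ψ_r^{-1}(x,y) = a_x(1_{x=y} − 1_{x+1=y}), with ψ_r^m denoting m-fold convolutions (ψ_r^0 = identity). Then for all x_1 < x_2 < ⋯ < x_N and y_1 < y_2 < ⋯ < y_N in ℤ≥0, det(ψ_r^{i−j}(x_i, y_j))_{i,j=1}^N = 1_{x=y}, i.e., the determinant equals 1 if x_i = y_i for all i and equals 0 otherwise. -/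
/-- `convPow K k` is the `k`-fold convolution of the kernel `K` with itself
(`convPow K 0` is the identity kernel). -/
noncomputable def convPow (K : ℕ → ℕ → ℝ) : ℕ → ℕ → ℕ → ℝ
  | 0 => fun x y => if x = y then 1 else 0
  | k + 1 => fun x y => ∑' m : ℕ, K x m * convPow K k m y

/-- `kerPow A Ainv m` is the `m`-fold convolution power: of `A` for `m ≥ 0`,
of `Ainv` for `m < 0`. -/
noncomputable def kerPow (A Ainv : ℕ → ℕ → ℝ) (m : ℤ) : ℕ → ℕ → ℝ :=
  if 0 ≤ m then convPow A m.toNat else convPow Ainv (-m).toNat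

section aux
variable (a : ℕ → ℝ)

noncomputable def Af : ℕ → ℕ → ℝ := fun u v => if u ≤ v then (a v)⁻¹ else 0
noncomputable def Bf : ℕ → ℕ → ℝ := fun u v =>
  a u * ((if u = v then (1 : ℝ) else 0) - (if u + 1 = v then 1 else 0))

lemma convPow_Af_eq_zero : ∀ (k x y : ℕ), y < x → convPow (Af a) k x y = 0
  | 0, x, y, h => by simp only [convPow]; rw [if_neg (by omega)]
  | k+1, x, y, h => by
    simp only [convPow]
    have hz : ∀ m : ℕ, Af a x m * convPow (Af a) k m y = 0 := by
      intro m
      rcases lt_or_ge m x with hm | hm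
      · have : Af a x m = 0 := if_neg (by omega)
        rw [this, zero_mul]
      · rw [convPow_Af_eq_zero k m y (lt_of_lt_of_le h hm), mul_zero]
    rw [tsum_congr hz, tsum_zero]

lemma convPow_Bf_eq_zero : ∀ (k x y : ℕ), (y < x ∨ x + k < y) → convPow (Bf a) k x y = 0
  | 0, x, y, h => by simp only [convPow]; rw [if_neg (by omega)]
  | k+1, x, y, h => by
    simp only [convPow]
    have hz : ∀ m : ℕ, Bf a x m * convPow (Bf a) k m y = 0 := by
      intro m
      by_cases hm : m = x ∨ m = x + 1
      · rw [convPow_Bf_eq_zero k m y (by omega), mul_zero]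
      · have : Bf a x m = 0 := by
          unfold Bf
          rw [if_neg (by omega), if_neg (by omega)]
          ring
        rw [this, zero_mul]
    rw [tsum_congr hz, tsum_zero]

lemma kerPow_sub_of_le {A B : ℕ → ℕ → ℝ} {i j : ℕ} (h : j ≤ i) :
    kerPow A B ((i : ℤ) - (j : ℤ)) = convPow A (i - j) := by
  have h1 : ((i : ℤ) - (j : ℤ)).toNat = i - j := by omega
  unfold kerPow; rw [if_pos (by omega), h1]

lemma kerPow_sub_of_lt {A B : ℕ → ℕ → ℝ} {i j : ℕ} (h : i < j) :
    kerPow A B ((i : ℤ) - (j : ℤ)) = convPow B (j - i) := by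
  have h1 : (-((i : ℤ) - (j : ℤ))).toNat = j - i := by omega
  unfold kerPow; rw [if_neg (by omega), h1]

lemma sm_gap {N : ℕ} {f : Fin N → ℕ} (hf : StrictMono f) :
    ∀ (d : ℕ) (i j : Fin N), (i : ℕ) + d = (j : ℕ) → f i + d ≤ f j
  | 0, i, j, h => by
    have : i = j := Fin.ext (by omega)
    simp [this]
  | d+1, i, j, h => by
    have hj : (i : ℕ) + d < N := by omega
    have h1 := sm_gap hf d i ⟨(i : ℕ) + d, hj⟩ rfl
    have h2 : f ⟨(i : ℕ) + d, hj⟩ < f j := hf (by simp [Fin.lt_def]; omega)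
    omega

lemma key : ∀ (N : ℕ) (x y : Fin N → ℕ), StrictMono x → StrictMono y →
    Matrix.det (Matrix.of fun i j : Fin N =>
        kerPow (Af a) (Bf a) (((i : ℕ) : ℤ) - ((j : ℕ) : ℤ)) (x i) (y j))
      = if x = y then 1 else 0 := by
  intro N
  induction N with
  | zero =>
    intro x y _ _
    rw [Matrix.det_fin_zero, if_pos (Subsingleton.elim x y)]
  | succ n ih =>
    intro x y hx hy
    set L : Fin (n + 1) := Fin.last n with hL
    rcases lt_trichotomy (x L) (y L) with hlt | heq | hgt
    · rw [if_neg (by intro h; rw [h] at hlt; omega)]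
      apply Matrix.det_eq_zero_of_column_eq_zero L
      intro i
      show kerPow (Af a) (Bf a) (((i : ℕ) : ℤ) - ((L : ℕ) : ℤ)) (x i) (y L) = 0
      rcases eq_or_lt_of_le (Fin.le_last i) with hi | hi
      · rw [show (i : Fin (n+1)) = L from hi, kerPow_sub_of_le le_rfl]
        simp only [Nat.sub_self, convPow]
        rw [if_neg (by omega)]
      · have hi' : (i : ℕ) < (L : ℕ) := hi
        rw [kerPow_sub_of_lt hi']
        apply convPow_Bf_eq_zero
        right
        have := sm_gap hx ((L : ℕ) - (i : ℕ)) i L (by omega)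
        omega
    · -- x L = y L : expand along the last row
      rw [Matrix.det_succ_row _ L]
      have hrow : ∀ j : Fin (n + 1), j ≠ L →
          (Matrix.of fun i j : Fin (n+1) =>
            kerPow (Af a) (Bf a) (((i : ℕ) : ℤ) - ((j : ℕ) : ℤ)) (x i) (y j)) L j = 0 := by
        intro j hj
        have hj' : (j : ℕ) ≤ (L : ℕ) := Fin.le_last j
        have hjlt : j < L := lt_of_le_of_ne (Fin.le_last j) hj
        show kerPow (Af a) (Bf a) (((L : ℕ) : ℤ) - ((j : ℕ) : ℤ)) (x L) (y j) = 0
        rw [kerPow_sub_of_le hj']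
        exact convPow_Af_eq_zero a _ _ _ (by have := hy hjlt; omega)
      rw [Finset.sum_eq_single L]
      · have hdiag : (Matrix.of fun i j : Fin (n+1) =>
            kerPow (Af a) (Bf a) (((i : ℕ) : ℤ) - ((j : ℕ) : ℤ)) (x i) (y j)) L L = 1 := by
          show kerPow (Af a) (Bf a) (((L : ℕ) : ℤ) - ((L : ℕ) : ℤ)) (x L) (y L) = 1
          rw [kerPow_sub_of_le le_rfl]
          simp only [Nat.sub_self, convPow]
          rw [if_pos heq]
        rw [hdiag, mul_one]
        have hsign : ((-1 : ℝ)) ^ ((L : ℕ) + (L : ℕ)) = 1 := by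
          exact Even.neg_one_pow ⟨(L : ℕ), rfl⟩
        rw [hsign, one_mul]
        have hsub : ((Matrix.of fun i j : Fin (n+1) =>
              kerPow (Af a) (Bf a) (((i : ℕ) : ℤ) - ((j : ℕ) : ℤ)) (x i) (y j)).submatrix
              L.succAbove L.succAbove)
            = Matrix.of (fun i j : Fin n =>
              kerPow (Af a) (Bf a) (((i : ℕ) : ℤ) - ((j : ℕ) : ℤ))
                ((x ∘ Fin.castSucc) i) ((y ∘ Fin.castSucc) j)) := by
          ext i j
          simp [Matrix.submatrix, hL, Fin.succAbove_last]
        rw [hsub, ih (x ∘ Fin.castSucc) (y ∘ Fin.castSucc)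
            (hx.comp Fin.strictMono_castSucc) (hy.comp Fin.strictMono_castSucc)]
        by_cases hxy : x = y
        · rw [if_pos hxy, if_pos (by rw [hxy])]
        · rw [if_neg hxy, if_neg ?_]
          intro hcs
          apply hxy
          funext i
          rcases Fin.lastCases (motive := fun i => x i = y i) heq
            (fun k => congrFun hcs k) i with h'
          exact h'
      · intro j _ hj
        rw [hrow j hj, mul_zero, zero_mul]
      · intro h
        exact absurd (Finset.mem_univ L) h
    · rw [if_neg (by intro h; rw [h] at hgt; omega)]
      apply Matrix.det_eq_zero_of_row_eq_zero L
      intro j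
      show kerPow (Af a) (Bf a) (((L : ℕ) : ℤ) - ((j : ℕ) : ℤ)) (x L) (y j) = 0
      rw [kerPow_sub_of_le (Fin.le_last j)]
      apply convPow_Af_eq_zero
      have : y j ≤ y L := hy.monotone (Fin.le_last j)
      omega

end aux

/-- The determinant `det(ψ_r^{i-j}(x_i, y_j))` equals the indicator `1_{x = y}`. -/
theorem stmt9 (a : ℕ → ℝ) (hpos : ∀ k, 0 < a k) (N : ℕ) (hN : 1 ≤ N)
    (x y : Fin N → ℕ) (hx : StrictMono x) (hy : StrictMono y) :
    Matrix.det (Matrix.of fun i j : Fin N =>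
        kerPow (fun u v => if u ≤ v then (a v)⁻¹ else 0)
          (fun u v => a u * ((if u = v then (1 : ℝ) else 0) - (if u + 1 = v then 1 else 0)))
          (((i : ℕ) : ℤ) - ((j : ℕ) : ℤ)) (x i) (y j))
      = if x = y then 1 else 0 := by
  exact key a N x y hx hy
end

section
/- Let a : ℤ≥0 → (0,∞) and for a parameter γ ≥ 0 define h_γ(x) = p_x(−γ) = ∏_{k=0}^{x−1}(1 + γ/a_k), and v_γ(x) = (a_x + γ)^{-1}. Then for all γ_1, γ_2 ≥ 0 with γ_1 ≠ γ_2 and all x < y in ℤ≥0: ∑_{m=x}^{y−1} v_{γ_2}(m) h_{γ_1}(m)/h_{γ_2}(m) = (γ_2 − γ_1)^{-1} [h_{γ_1}(x)/h_{γ_2}(x) − h_{γ_1}(y)/h_{γ_2}(y)]. -/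
lemma telesum (f : ℕ → ℝ) (x y : ℕ) (hxy : x ≤ y) :
    ∑ m ∈ Finset.Ico x y, (f m - f (m + 1)) = f x - f y := by
  induction y, hxy using Nat.le_induction with
  | base => simp
  | succ n hn ih =>
      rw [Finset.sum_Ico_succ_top (by omega), ih]; ring

/-- Telescoping identity for the pure-birth eigenfunctions `h_γ(x) = p_x(-γ)`. -/
theorem stmt10 (a : ℕ → ℝ) (hpos : ∀ k, 0 < a k) (γ₁ γ₂ : ℝ) (hγ₁ : 0 ≤ γ₁) (hγ₂ : 0 ≤ γ₂)
    (hne : γ₁ ≠ γ₂) (x y : ℕ) (hxy : x < y) :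
    ∑ m ∈ Finset.Ico x y,
        (a m + γ₂)⁻¹ *
          ((∏ k ∈ Finset.range m, (1 + γ₁ / a k)) / (∏ k ∈ Finset.range m, (1 + γ₂ / a k)))
      = (γ₂ - γ₁)⁻¹ *
          ((∏ k ∈ Finset.range x, (1 + γ₁ / a k)) / (∏ k ∈ Finset.range x, (1 + γ₂ / a k)) -
            (∏ k ∈ Finset.range y, (1 + γ₁ / a k)) / (∏ k ∈ Finset.range y, (1 + γ₂ / a k))) := by
  set f : ℕ → ℝ := fun m =>
    (∏ k ∈ Finset.range m, (1 + γ₁ / a k)) / (∏ k ∈ Finset.range m, (1 + γ₂ / a k)) with hf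
  have hd : γ₂ - γ₁ ≠ 0 := sub_ne_zero.mpr (Ne.symm hne)
  have key : ∀ m, (a m + γ₂)⁻¹ * f m = (γ₂ - γ₁)⁻¹ * (f m - f (m + 1)) := by
    intro m
    have ha := hpos m
    have haγ : a m + γ₂ ≠ 0 := by positivity
    have hprod : (0 : ℝ) < ∏ k ∈ Finset.range m, (1 + γ₂ / a k) := by
      apply Finset.prod_pos; intro k _; have := hpos k; positivity
    have hfm1 : f (m + 1) = f m * ((1 + γ₁ / a m) / (1 + γ₂ / a m)) := by
      simp only [hf, Finset.prod_range_succ]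
      field_simp
    rw [hfm1]
    have h1 : (1 : ℝ) + γ₂ / a m ≠ 0 := by positivity
    field_simp
    ring
  rw [Finset.sum_congr rfl (fun m _ => key m), ← Finset.mul_sum,
    telesum f x y hxy.le]
end

section
/- Let a : ℤ≥0 → (0,∞), 0 < γ_1, γ_2 ≤ 1 with γ_1 ≠ γ_2, and define h_γ(x) = p_x(1 − γ^{-1}) = ∏_{k=0}^{x−1}(1 − (1−γ^{-1})/a_k) and v_γ(x) = (γ a_x + 1 − γ)^{-1}. Then for all x < y in ℤ≥0: ∑_{m=x}^{y−1} v_{γ_2}(m) h_{γ_1}(m)/h_{γ_2}(m) = (γ_1/(γ_1 − γ_2)) [h_{γ_1}(x)/h_{γ_2}(x) − h_{γ_1}(y)/h_{γ_2}(y)]. -/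
lemma stmt11_aux (A γ₁ γ₂ p1 p2 : ℝ) (ha : A ≠ 0) (h1 : γ₁ ≠ 0) (h2 : γ₂ ≠ 0)
    (hd : γ₁ - γ₂ ≠ 0) (hp2 : p2 ≠ 0) (ht : 1 - (1 - γ₂⁻¹) / A ≠ 0)
    (hv : γ₂ * A + 1 - γ₂ ≠ 0) :
    (γ₂ * A + 1 - γ₂)⁻¹ * (p1 / p2)
      = (γ₁ / (γ₁ - γ₂)) *
          (p1 / p2 - p1 * (1 - (1 - γ₁⁻¹) / A) / (p2 * (1 - (1 - γ₂⁻¹) / A))) := by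
  have e2 : 1 - (1 - γ₂⁻¹) / A = (γ₂ * A + 1 - γ₂) / (γ₂ * A) := by
    field_simp; ring
  have e1 : 1 - (1 - γ₁⁻¹) / A = (γ₁ * A + 1 - γ₁) / (γ₁ * A) := by
    field_simp; ring
  rw [e1, e2]
  field_simp
  ring

/-- Telescoping identity for the Bernoulli eigenfunctions `h_γ(x) = p_x(1 - γ⁻¹)`. -/
theorem stmt11 (a : ℕ → ℝ) (hpos : ∀ k, 0 < a k) (ε : ℝ) (hε : 0 < ε) (hlb : ∀ k, ε ≤ a k)
    (hub : ∀ k, a k ≤ 1)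
    (γ₁ γ₂ : ℝ) (h10 : 0 < γ₁) (h11 : γ₁ ≤ 1) (h20 : 0 < γ₂) (h21 : γ₂ ≤ 1) (hne : γ₁ ≠ γ₂)
    (x y : ℕ) (hxy : x < y) :
    ∑ m ∈ Finset.Ico x y,
        (γ₂ * a m + 1 - γ₂)⁻¹ *
          ((∏ k ∈ Finset.range m, (1 - (1 - γ₁⁻¹) / a k)) /
            (∏ k ∈ Finset.range m, (1 - (1 - γ₂⁻¹) / a k)))
      = (γ₁ / (γ₁ - γ₂)) *
          ((∏ k ∈ Finset.range x, (1 - (1 - γ₁⁻¹) / a k)) /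
              (∏ k ∈ Finset.range x, (1 - (1 - γ₂⁻¹) / a k)) -
            (∏ k ∈ Finset.range y, (1 - (1 - γ₁⁻¹) / a k)) /
              (∏ k ∈ Finset.range y, (1 - (1 - γ₂⁻¹) / a k))) := by
  have hγ1 : γ₁ ≠ 0 := h10.ne'
  have hγ2 : γ₂ ≠ 0 := h20.ne'
  have hd : γ₁ - γ₂ ≠ 0 := sub_ne_zero.mpr hne
  have ht2 : ∀ m, 0 < 1 - (1 - γ₂⁻¹) / a m := by
    intro m
    have h1 : 1 ≤ γ₂⁻¹ := (one_le_inv_iff₀).mpr ⟨h20, h21⟩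
    have h2 : (1 - γ₂⁻¹) / a m ≤ 0 :=
      div_nonpos_of_nonpos_of_nonneg (by linarith) (hpos m).le
    linarith
  have hH2 : ∀ m, 0 < ∏ k ∈ Finset.range m, (1 - (1 - γ₂⁻¹) / a k) :=
    fun m => Finset.prod_pos fun k _ => ht2 k
  set g : ℕ → ℝ := fun m =>
    (∏ k ∈ Finset.range m, (1 - (1 - γ₁⁻¹) / a k)) /
      (∏ k ∈ Finset.range m, (1 - (1 - γ₂⁻¹) / a k)) with hg
  have key : ∀ m, (γ₂ * a m + 1 - γ₂)⁻¹ * g m = (γ₁ / (γ₁ - γ₂)) * (g m - g (m + 1)) := by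
    intro m
    have hv : 0 < γ₂ * a m + 1 - γ₂ := by nlinarith [hpos m]
    simp only [hg, Finset.prod_range_succ]
    exact stmt11_aux (a m) γ₁ γ₂ _ _ (hpos m).ne' hγ1 hγ2 hd (hH2 m).ne' (ht2 m).ne' hv.ne'
  calc ∑ m ∈ Finset.Ico x y, (γ₂ * a m + 1 - γ₂)⁻¹ * g m
      = ∑ m ∈ Finset.Ico x y, (γ₁ / (γ₁ - γ₂)) * (g m - g (m + 1)) :=
        Finset.sum_congr rfl fun m _ => key m
    _ = (γ₁ / (γ₁ - γ₂)) * ∑ m ∈ Finset.Ico x y, (g m - g (m + 1)) := by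
        rw [Finset.mul_sum]
    _ = (γ₁ / (γ₁ - γ₂)) * (g x - g y) := by
        rw [Finset.sum_Ico_eq_sub _ hxy.le, Finset.sum_range_sub' g, Finset.sum_range_sub' g]
        ring
end

section
/- Let a : ℤ≥0 → (0,∞) with sup_k a_k − inf_k a_k < 1, β > 0 with β(sup_k a_k − inf_k a_k) < 1, and let T(x,y) = (1/(1+β a_y)) ∏_{k=x}^{y−1} (β a_k/(1+β a_k)) 1_{y≥x} be the geometric transition kernel. Then for λ ∈ ℂ with |λ| < β^{-1} − (sup_k a_k − inf_k a_k) and h_λ(x) = p_x(λ) = ∏_{k=0}^{x−1}(1 − λ/a_k), we have ∑_{y=x}^{∞} T(x,y) h_λ(y) = (1+βλ)^{-1} h_λ(x) for all x ∈ ℤ≥0, with the series absolutely convergent. -/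
open Finset Filter

/-- `h_λ(x) = p_x(λ)` is an eigenfunction of the inhomogeneous geometric transition
kernel with eigenvalue `(1 + βλ)⁻¹`, the defining series being absolutely convergent. -/
theorem stmt13 (a : ℕ → ℝ) (hpos : ∀ k, 0 < a k) (hbdd : BddAbove (Set.range a))
    (hR : sSup (Set.range a) - sInf (Set.range a) < 1)
    (β : ℝ) (hβ : 0 < β) (hβR : β * (sSup (Set.range a) - sInf (Set.range a)) < 1)
    (lam : ℂ) (hlam : ‖lam‖ < β⁻¹ - (sSup (Set.range a) - sInf (Set.range a)))
    (x : ℕ) :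
    Summable (fun y : ℕ =>
      ((if x ≤ y then (1 + β * a y)⁻¹ * ∏ k ∈ Finset.Ico x y, (β * a k / (1 + β * a k))
          else 0 : ℝ) : ℂ) *
        ∏ k ∈ Finset.range y, (1 - lam / (a k : ℂ))) ∧
    (∑' y : ℕ,
        ((if x ≤ y then (1 + β * a y)⁻¹ * ∏ k ∈ Finset.Ico x y, (β * a k / (1 + β * a k))
            else 0 : ℝ) : ℂ) *
          ∏ k ∈ Finset.range y, (1 - lam / (a k : ℂ)))
      = (1 + (β : ℂ) * lam)⁻¹ * ∏ k ∈ Finset.range x, (1 - lam / (a k : ℂ)) := by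
  set t : ℕ → ℂ := fun y : ℕ =>
      ((if x ≤ y then (1 + β * a y)⁻¹ * ∏ k ∈ Finset.Ico x y, (β * a k / (1 + β * a k))
          else 0 : ℝ) : ℂ) *
        ∏ k ∈ Finset.range y, (1 - lam / (a k : ℂ)) with htdef
  set M := sSup (Set.range a) with hMdef
  set m := sInf (Set.range a) with hmdef
  have hM : ∀ k, a k ≤ M := fun k => le_csSup hbdd ⟨k, rfl⟩
  have hm0 : 0 ≤ m := le_csInf ⟨a 0, 0, rfl⟩ (by rintro _ ⟨k, rfl⟩; exact (hpos k).le)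
  have hmM : m ≤ M :=
    le_trans (csInf_le ⟨0, by rintro _ ⟨k, rfl⟩; exact (hpos k).le⟩ ⟨0, rfl⟩) (hM 0)
  set c := ‖lam‖ with hcdef
  have hc0 : 0 ≤ c := norm_nonneg lam
  have hcβ : β * c < 1 := by
    have h1 : c < β⁻¹ := by linarith
    calc β * c < β * β⁻¹ := mul_lt_mul_of_pos_left h1 hβ
    _ = 1 := mul_inv_cancel₀ hβ.ne'
  have hM0 : 0 < M := lt_of_lt_of_le (hpos 0) (hM 0)
  set r := β * (M + c) / (1 + β * M) with hrdef
  have hden : ∀ k, 0 < 1 + β * a k := fun k => by nlinarith [hpos k]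
  have hr0 : 0 < r := div_pos (by nlinarith) (by nlinarith)
  have hr1 : r < 1 := by
    rw [div_lt_one (by nlinarith)]; nlinarith
  clear_value t M m c r
  have hane : ∀ k, (a k : ℂ) ≠ 0 := fun k => by exact_mod_cast (hpos k).ne'
  have hdne : ∀ k, (1 + (β : ℂ) * (a k : ℂ)) ≠ 0 := fun k => by
    have := (hden k).ne'
    exact_mod_cast (by exact_mod_cast this : ((1 + β * a k : ℝ) : ℂ) ≠ 0)
  set q : ℕ → ℂ := fun k => ((β * a k / (1 + β * a k) : ℝ) : ℂ) * (1 - lam / (a k : ℂ))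
    with hqdef
  clear_value q
  have hq : ∀ k, ‖q k‖ ≤ r := by
    intro k
    have hak := hpos k
    have hdk := hden k
    have h1 : ‖(1 - lam / (a k : ℂ))‖ ≤ 1 + c / a k := by
      calc ‖(1 - lam / (a k : ℂ))‖ ≤ ‖(1 : ℂ)‖ + ‖lam / (a k : ℂ)‖ := norm_sub_le _ _
      _ = 1 + c / a k := by
          rw [norm_one, norm_div, Complex.norm_real, Real.norm_eq_abs,
            abs_of_pos hak, hcdef]
    have h2 : ‖((β * a k / (1 + β * a k) : ℝ) : ℂ)‖ = β * a k / (1 + β * a k) := by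
      rw [Complex.norm_real, Real.norm_eq_abs, abs_of_pos (by positivity)]
    calc ‖q k‖ = ‖((β * a k / (1 + β * a k) : ℝ) : ℂ)‖ * ‖(1 - lam / (a k : ℂ))‖ := by
          simp only [hqdef]; exact norm_mul _ _
    _ ≤ (β * a k / (1 + β * a k)) * (1 + c / a k) := by
        rw [h2]; exact mul_le_mul_of_nonneg_left h1 (by positivity)
    _ = β * (a k + c) / (1 + β * a k) := by field_simp
    _ ≤ r := by
        rw [hrdef, div_le_div_iff₀ hdk (by nlinarith)]
        nlinarith [mul_nonneg (mul_nonneg hβ.le (sub_nonneg.2 (hM k))) (sub_nonneg.2 hcβ.le)]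
  set h0 : ℂ := ∏ k ∈ Finset.range x, (1 - lam / (a k : ℂ)) with hh0
  set g : ℕ → ℂ := fun y => h0 * ∏ k ∈ Finset.Ico x y, q k with hg
  clear_value h0 g
  have ht : ∀ y, x ≤ y → t y = (((1 + β * a y : ℝ) : ℂ))⁻¹ * g y := by
    intro y hxy
    simp only [htdef, hg, hqdef, hh0, if_pos hxy]
    rw [← Finset.prod_range_mul_prod_Ico (fun k => (1 - lam / (a k : ℂ))) hxy,
      Finset.prod_mul_distrib]
    push_cast
    ring
  have hstep : ∀ y, x ≤ y → g (y + 1) = g y * q y := by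
    intro y hxy
    simp only [hg]
    rw [Finset.prod_Ico_succ_top hxy]
    ring
  have hne : (1 + (β : ℂ) * lam) ≠ 0 := by
    intro h
    have h1 : (β : ℂ) * lam = -1 := by linear_combination h
    have h2 : ‖(β : ℂ) * lam‖ = 1 := by rw [h1]; simp
    rw [norm_mul, Complex.norm_real, Real.norm_eq_abs, abs_of_pos hβ] at h2
    rw [← hcdef] at h2
    linarith
  have htel : ∀ y, x ≤ y → t y = (1 + (β : ℂ) * lam)⁻¹ * (g y - g (y + 1)) := by
    intro y hxy
    rw [ht y hxy, hstep y hxy]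
    have key : ((1 + β * a y : ℝ) : ℂ)⁻¹ = (1 + (β : ℂ) * lam)⁻¹ * (1 - q y) := by
      simp only [hqdef]
      push_cast
      field_simp [hdne y, hane y, hne]
      ring
    rw [key]
    ring
  -- norm bounds
  have hgb : ∀ y, x ≤ y → ‖g y‖ ≤ ‖h0‖ * r ^ (y - x) := by
    intro y hxy
    simp only [hg]
    rw [norm_mul]
    refine mul_le_mul_of_nonneg_left ?_ (norm_nonneg _)
    calc ‖∏ k ∈ Finset.Ico x y, q k‖ ≤ ∏ k ∈ Finset.Ico x y, ‖q k‖ := norm_prod_le _ _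
    _ ≤ ∏ k ∈ Finset.Ico x y, r :=
        Finset.prod_le_prod (fun k _ => norm_nonneg _) (fun k _ => hq k)
    _ = r ^ (y - x) := by rw [Finset.prod_const, Nat.card_Ico]
  have htb : ∀ y, ‖t y‖ ≤ (‖h0‖ / r ^ x) * r ^ y := by
    intro y
    by_cases hxy : x ≤ y
    · rw [ht y hxy, norm_mul]
      have h1 : ‖(((1 + β * a y : ℝ) : ℂ))⁻¹‖ ≤ 1 := by
        rw [norm_inv, Complex.norm_real, Real.norm_eq_abs, abs_of_pos (hden y)]
        rw [inv_le_one_iff₀]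
        right
        nlinarith [hpos y]
      calc ‖(((1 + β * a y : ℝ) : ℂ))⁻¹‖ * ‖g y‖ ≤ 1 * ‖g y‖ :=
            mul_le_mul_of_nonneg_right h1 (norm_nonneg _)
      _ = ‖g y‖ := one_mul _
      _ ≤ ‖h0‖ * r ^ (y - x) := hgb y hxy
      _ = (‖h0‖ / r ^ x) * r ^ y := by
          rw [pow_sub₀ r hr0.ne' hxy]
          ring
    · have : t y = 0 := by
        simp [htdef, if_neg hxy]
      rw [this, norm_zero]
      positivity
  have hsum : Summable t := by
    refine Summable.of_norm ?_
    refine Summable.of_nonneg_of_le (fun y => norm_nonneg _) htb ?_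
    exact (summable_geometric_of_lt_one hr0.le hr1).mul_left _
  -- partial sums
  have hS : ∀ n, x ≤ n →
      ∑ y ∈ Finset.range n, t y = (1 + (β : ℂ) * lam)⁻¹ * (g x - g n) := by
    intro n hn
    induction n, hn using Nat.le_induction with
    | base =>
      rw [Finset.sum_eq_zero, sub_self, mul_zero]
      intro y hy
      have hy' : ¬ x ≤ y := by
        rw [Finset.mem_range] at hy; omega
      simp [htdef, hy']
    | succ n hn ih =>
      rw [Finset.sum_range_succ, ih, htel n hn]
      ring
  -- g tends to 0
  have hg0 : Tendsto g atTop (nhds 0) := by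
    have htend : Tendsto (fun n : ℕ => (‖h0‖ / r ^ x) * r ^ n) atTop (nhds 0) := by
      simpa using (tendsto_pow_atTop_nhds_zero_of_lt_one hr0.le hr1).const_mul
        (‖h0‖ / r ^ x)
    refine squeeze_zero_norm' ?_ htend
    filter_upwards [eventually_ge_atTop x] with n hn
    calc ‖g n‖ ≤ ‖h0‖ * r ^ (n - x) := hgb n hn
    _ = (‖h0‖ / r ^ x) * r ^ n := by
        rw [pow_sub₀ r hr0.ne' hn]; ring
  have hgx : g x = h0 := by rw [hg]; simp
  have hT : Tendsto (fun n => ∑ y ∈ Finset.range n, t y) atTop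
      (nhds ((1 + (β : ℂ) * lam)⁻¹ * h0)) := by
    have h1 : Tendsto (fun n => (1 + (β : ℂ) * lam)⁻¹ * (g x - g n)) atTop
        (nhds ((1 + (β : ℂ) * lam)⁻¹ * (g x - 0))) :=
      (tendsto_const_nhds.sub hg0).const_mul _
    rw [sub_zero, hgx] at h1
    refine Tendsto.congr' ?_ h1
    filter_upwards [eventually_ge_atTop x] with n hn
    rw [← hgx]
    exact (hS n hn).symm
  refine ⟨hsum, ?_⟩
  have h2 := hsum.hasSum.tendsto_sum_nat
  have h3 := tendsto_nhds_unique h2 hT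
  rw [h3, hh0]
end

section
/- Let IA* denote the set of infinite interlacing integer arrays (x_i^{(j)})_{0≤i≤j, j≥0} such that for each column i there exists j_i with x_i^{(n)} = i for all n ≥ j_i. For such a configuration define h_i(j) = #{n ≥ i : x_i^{(n)} > j} and the map Hgt sending (x_i^{(j)}) to (h_i(j) + i)_{0≤i≤j}. Then Hgt maps IA* to IA* and is an involution: Hgt ∘ Hgt = id on IA*. -/
/-- `x` is an infinite interlacing array: level `n` carries `n + 1` particles
`x n 0 < x n 1 < ⋯ < x n n` (strict monotonicity follows from interlacing) and
consecutive levels interlace: `x_{i}^{(n+1)} ≤ x_i^{(n)} < x_{i+1}^{(n+1)}`. -/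
def InterlacingProp (x : (n : ℕ) → Fin (n + 1) → ℕ) : Prop :=
  ∀ (n : ℕ) (i : Fin (n + 1)), x (n + 1) i.castSucc ≤ x n i ∧ x n i < x (n + 1) i.succ

/-- `x ∈ IA*`: every column eventually equals its minimal value `i`. -/
def IAStarProp (x : (n : ℕ) → Fin (n + 1) → ℕ) : Prop :=
  ∀ i : ℕ, ∃ J : ℕ, ∀ (n : ℕ) (h : i ≤ n), J ≤ n → x n ⟨i, Nat.lt_succ_of_le h⟩ = i

/-- The height-function map `Hgt`, sending `(x_i^{(j)})` to `(h_i(j) + i)` where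
`h_i(j) = #{n ≥ i : x_i^{(n)} > j}`. -/
noncomputable def heightMap (x : (n : ℕ) → Fin (n + 1) → ℕ) : (n : ℕ) → Fin (n + 1) → ℕ :=
  fun n i =>
    Set.ncard {m : ℕ | ∃ h : (i : ℕ) ≤ m, n < x m ⟨(i : ℕ), Nat.lt_succ_of_le h⟩} + (i : ℕ)

/-!
Shift column `i` down by `i`: `k ↦ x_i^{(i+k)} - i`. Interlacing makes it antitone and `IA*` makes
it eventually zero, so it is a partition, and `h_i(n)` counts its parts exceeding `n - i`: the
shifted columns of `Hgt x` are the conjugates of those of `x`. Conjugation of partitions is an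
involution, antitone in the argument and monotone in the partition; since interlacing also makes
column `i` pointwise at most column `i + 1`, `Hgt x` interlaces again.
-/

open Set

namespace Nat

/-- The conjugate of `a`, read as the partition `a 0 ≥ a 1 ≥ ⋯`. -/
noncomputable def conjugate (a : ℕ → ℕ) (n : ℕ) : ℕ := {k | n < a k}.ncard

variable {a b : ℕ → ℕ}

lemma finite_setOf_lt_of_eq_zero (ha : Antitone a) {K : ℕ} (hK : a K = 0) (n : ℕ) :
    {k | n < a k}.Finite :=
  (finite_Iio K).subset fun _ hk =>
    not_le.mp fun hKk => Nat.not_lt_zero n (lt_of_lt_of_le hk ((ha hKk).trans_eq hK))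

lemma lt_conjugate_iff (ha : Antitone a) {K : ℕ} (hK : a K = 0) {k n : ℕ} :
    k < conjugate a n ↔ n < a k := by
  have hlow : IsLowerSet {k | n < a k} := fun k l hlk hk => lt_of_lt_of_le hk (ha hlk)
  obtain hU | ⟨c, hc⟩ := hlow.eq_univ_or_Iio
  · exact absurd (hU ▸ finite_setOf_lt_of_eq_zero ha hK n) infinite_univ
  · rw [conjugate, hc, ncard_Iio_nat, ← mem_Iio, ← hc, mem_ofPred_eq]

lemma conjugate_conjugate (ha : Antitone a) {K : ℕ} (hK : a K = 0) :
    conjugate (conjugate a) = a := by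
  funext m
  have : {n | m < conjugate a n} = Iio (a m) := by
    ext n
    exact lt_conjugate_iff ha hK
  rw [conjugate, this, ncard_Iio_nat]

lemma conjugate_antitone (ha : Antitone a) {K : ℕ} (hK : a K = 0) :
    Antitone (conjugate a) := fun _ _ hnm =>
  ncard_le_ncard (fun _ hk => lt_of_le_of_lt hnm hk) (finite_setOf_lt_of_eq_zero ha hK _)

lemma conjugate_mono (hb : Antitone b) {K : ℕ} (hK : b K = 0) (hab : a ≤ b) (n : ℕ) :
    conjugate a n ≤ conjugate b n :=
  ncard_le_ncard (fun k hk => lt_of_lt_of_le hk (hab k)) (finite_setOf_lt_of_eq_zero hb hK n)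

lemma conjugate_eq_zero (ha : Antitone a) {n : ℕ} (hn : a 0 ≤ n) : conjugate a n = 0 := by
  have : {k | n < a k} = ∅ :=
    eq_empty_of_forall_notMem fun k hk => (lt_of_lt_of_le hk (ha (zero_le k))).not_ge hn
  rw [conjugate, this, ncard_empty]

end Nat

lemma apply_mk_congr {α : Type*} (f : (n : ℕ) → Fin (n + 1) → α) {m m' i : ℕ} (h : m = m')
    (hi : i < m + 1) : f m ⟨i, hi⟩ = f m' ⟨i, h ▸ hi⟩ := by
  subst h
  rfl

def column (x : (n : ℕ) → Fin (n + 1) → ℕ) (i k : ℕ) : ℕ := x (i + k) ⟨i, by omega⟩ - i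

section

variable {x : (n : ℕ) → Fin (n + 1) → ℕ}

lemma InterlacingProp.col_antitone (hint : InterlacingProp x) {i m n : ℕ} (him : i ≤ m)
    (hmn : m ≤ n) :
    x n ⟨i, by omega⟩ ≤ x m ⟨i, by omega⟩ := by
  induction n, hmn using Nat.le_induction with
  | base => exact le_rfl
  | succ n hmn ih => exact (hint n ⟨i, by omega⟩).1.trans ih

lemma InterlacingProp.le_col (hint : InterlacingProp x) :
    ∀ {i n : ℕ} (h : i ≤ n), i ≤ x n ⟨i, by omega⟩
  | 0, _, _ => Nat.zero_le _
  | i + 1, n + 1, h => (le_col hint (by omega : i ≤ n)).trans_lt (hint n ⟨i, by omega⟩).2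
  | _ + 1, 0, h => absurd h (by omega)

lemma antitone_column (hint : InterlacingProp x) (i : ℕ) : Antitone (column x i) :=
  fun _ _ hkl => Nat.sub_le_sub_right (hint.col_antitone (by omega) (by omega)) i

lemma exists_column_eq_zero (hstar : IAStarProp x) (i : ℕ) : ∃ K, column x i K = 0 := by
  obtain ⟨J, hJ⟩ := hstar i
  exact ⟨J, by simp [column, hJ (i + J) (by omega) (by omega)]⟩

lemma column_le_column_succ (hint : InterlacingProp x) (i : ℕ) :
    column x i ≤ column x (i + 1) := by
  intro k
  have hlt := (hint (i + k) ⟨i, by omega⟩).2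
  simp only [Fin.succ_mk] at hlt
  rw [column, column, apply_mk_congr x (Nat.add_right_comm i 1 k)]
  simpa using Nat.sub_le_sub_right hlt (i + 1)

lemma apply_eq_column_add (hint : InterlacingProp x) {i n : ℕ} (h : i ≤ n) :
    x n ⟨i, by omega⟩ = column x i (n - i) + i := by
  have := hint.le_col h
  rw [column, apply_mk_congr x (Nat.add_sub_cancel' h)]
  omega

lemma heightMap_apply (hint : InterlacingProp x) {i n : ℕ} (h : i ≤ n) :
    heightMap x n ⟨i, by omega⟩ = Nat.conjugate (column x i) (n - i) + i := by
  have hset : {m : ℕ | ∃ h : i ≤ m, n < x m ⟨i, by omega⟩}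
      = (i + ·) '' {k | n - i < column x i k} := by
    ext m
    constructor
    · rintro ⟨him, hm⟩
      obtain ⟨k, rfl⟩ := Nat.exists_eq_add_of_le him
      exact ⟨k, by rw [mem_ofPred_eq, column]; omega, rfl⟩
    · rintro ⟨k, hk, rfl⟩
      have := hint.le_col (Nat.le_add_right i k)
      exact ⟨Nat.le_add_right i k, by rw [mem_ofPred_eq, column] at hk; beta_reduce; omega⟩
  rw [heightMap, hset, ncard_image_of_injective _ (add_right_injective i), Nat.conjugate]

lemma column_heightMap (hint : InterlacingProp x) (i : ℕ) :
    column (heightMap x) i = Nat.conjugate (column x i) := by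
  funext k
  simp [column, heightMap_apply hint (Nat.le_add_right i k)]

lemma interlacingProp_heightMap (hint : InterlacingProp x) (hstar : IAStarProp x) :
    InterlacingProp (heightMap x) := by
  rintro n ⟨i, hi⟩
  obtain ⟨K, hK⟩ := exists_column_eq_zero hstar i
  obtain ⟨K', hK'⟩ := exists_column_eq_zero hstar (i + 1)
  simp only [Fin.castSucc_mk, Fin.succ_mk]
  rw [heightMap_apply hint (by omega : i ≤ n + 1), heightMap_apply hint (by omega : i ≤ n),
    heightMap_apply hint (by omega : i + 1 ≤ n + 1), Nat.add_sub_add_right]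
  constructor
  · gcongr ?_ + i
    exact Nat.conjugate_antitone (antitone_column hint i) hK (by omega)
  · have := Nat.conjugate_mono (antitone_column hint (i + 1)) hK' (column_le_column_succ hint i)
      (n - i)
    omega

lemma iaStarProp_heightMap (hint : InterlacingProp x) : IAStarProp (heightMap x) := by
  intro i
  refine ⟨x i ⟨i, by omega⟩, fun n hin hn => ?_⟩
  rw [heightMap_apply hint hin, Nat.conjugate_eq_zero (antitone_column hint i), zero_add]
  simp only [column, Nat.add_zero]
  omega

lemma heightMap_heightMap (hint : InterlacingProp x) (hstar : IAStarProp x) :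
    heightMap (heightMap x) = x := by
  funext n ⟨i, hi⟩
  obtain ⟨K, hK⟩ := exists_column_eq_zero hstar i
  rw [heightMap_apply (interlacingProp_heightMap hint hstar) (by omega : i ≤ n),
    column_heightMap hint, Nat.conjugate_conjugate (antitone_column hint i) hK,
    ← apply_eq_column_add hint (by omega : i ≤ n)]

end

/-- `Hgt` maps `IA*` to `IA*` and is an involution on `IA*`. -/
theorem stmt14 (x : (n : ℕ) → Fin (n + 1) → ℕ)
    (hint : InterlacingProp x) (hstar : IAStarProp x) :
    InterlacingProp (heightMap x) ∧ IAStarProp (heightMap x) ∧ heightMap (heightMap x) = x :=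
  ⟨interlacingProp_heightMap hint hstar, iaStarProp_heightMap hint,
    heightMap_heightMap hint hstar⟩
end

section
/- Let a : ℤ≥0 → (0,∞), β ≥ 0, and let T(x,y) = (1/(1+β a_y)) ∏_{k=x}^{y−1}(β a_k/(1+β a_k)) 1_{y≥x} be the geometric kernel. Define Blk(y', y, x) = T(y, y')·(1_{y'<x} + (1+β a_{y'}) 1_{y'=x}) and Psh(y', y, x') = T(y, y') 1_{x'<y} + T(x'+1, y') 1_{x'≥y}. Then for all integers y_i ≤ y_i' < y_{i+1} ≤ y_{i+1}' and y_i' ≤ x_i' < y_{i+1}': ∑_{x_i = y_i'}^{min(x_i', y_{i+1}−1)} a_{x_i}^{-1} T(x_i, x_i') Blk(y_i', y_i, x_i) Psh(y_{i+1}', y_{i+1}, x_i') = a_{x_i'}^{-1} T(y_i, y_i') T(y_{i+1}, y_{i+1}'); and the left-hand side vanishes whenever the constraints y_i ≤ y_i' < y_{i+1} ≤ y_{i+1}' and y_i' ≤ x_i' < y_{i+1}' fail. -/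
/-!
Peeling off the factor at an intermediate site `m` factorises the geometric kernel,
`T(x, y) = T(x, m) · β a_m · T(m+1, y)`; taking `m = x` gives
`T(x, y) (a_x⁻¹ + β) = β T(x+1, y)`.
This makes the sum over `x_i` telescope: its partial sums up to `N` equal
`T(y_i, y_i') T(N, x_i') (a_N⁻¹ + β)`. The sum stops at `N = x_i'` if `x_i' < y_{i+1}`, and
then `T(N, N) (a_N⁻¹ + β) = a_N⁻¹`; otherwise it stops at `N = y_{i+1} - 1`, and one more
factorisation at `x_i'` merges `β T(y_{i+1}, x_i') T(x_i' + 1, y_{i+1}')` into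
`a_{x_i'}⁻¹ T(y_{i+1}, y_{i+1}')`.
-/

open Finset

noncomputable section

section GeometricKernel

variable (a : ℕ → ℝ) (β : ℝ)

def geomKernel (x y : ℕ) : ℝ :=
  if x ≤ y then (1 + β * a y)⁻¹ * ∏ k ∈ Ico x y, (β * a k / (1 + β * a k)) else 0

def geomBlock (y' y x : ℕ) : ℝ :=
  geomKernel a β y y' *
    ((if y' < x then (1 : ℝ) else 0) + (1 + β * a y') * (if y' = x then 1 else 0))

def geomPush (y' y x' : ℕ) : ℝ :=
  geomKernel a β y y' * (if x' < y then (1 : ℝ) else 0) +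
    geomKernel a β (x' + 1) y' * (if y ≤ x' then 1 else 0)

variable {a β}

theorem geomKernel_of_lt {x y : ℕ} (h : y < x) : geomKernel a β x y = 0 := by
  simp [geomKernel, Nat.not_le.mpr h]

theorem geomKernel_self (y : ℕ) : geomKernel a β y y = (1 + β * a y)⁻¹ := by
  simp [geomKernel]

theorem geomKernel_eq_mul_mul {x m y : ℕ} (hxm : x ≤ m) (hmy : m < y)
    (hm : 1 + β * a m ≠ 0) :
    geomKernel a β x y = geomKernel a β x m * (β * a m) * geomKernel a β (m + 1) y := by
  simp only [geomKernel, if_pos hxm, if_pos (show m + 1 ≤ y from hmy), if_pos (hxm.trans hmy.le)]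
  rw [← Ico_union_Ico_eq_Ico hxm hmy.le, prod_union (Ico_disjoint_Ico_consecutive x m y),
    prod_eq_prod_Ico_succ_bot hmy]
  field_simp

theorem geomKernel_mul_inv_add {x y : ℕ} (hxy : x < y) (ha : a x ≠ 0)
    (hx : 1 + β * a x ≠ 0) :
    geomKernel a β x y * ((a x)⁻¹ + β) = β * geomKernel a β (x + 1) y := by
  rw [geomKernel_eq_mul_mul le_rfl hxy hx, geomKernel_self]
  field_simp

theorem geomKernel_self_mul_inv_add {y : ℕ} (ha : a y ≠ 0) (hy : 1 + β * a y ≠ 0) :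
    geomKernel a β y y * ((a y)⁻¹ + β) = (a y)⁻¹ := by
  rw [geomKernel_self]
  field_simp

theorem geomBlock_of_lt {y' y : ℕ} (h : y' < y) (x : ℕ) : geomBlock a β y' y x = 0 := by
  simp [geomBlock, geomKernel_of_lt h]

theorem geomPush_eq_zero {y' y x' : ℕ} (h : ¬(y ≤ y' ∧ x' < y')) :
    geomPush a β y' y x' = 0 := by
  unfold geomPush
  by_cases hx' : x' < y
  · rw [geomKernel_of_lt (show y' < y by omega), if_neg (show ¬y ≤ x' by omega)]
    ring
  · rw [geomKernel_of_lt (show y' < x' + 1 by omega), if_neg hx']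
    ring

variable (ha : ∀ k, a k ≠ 0) (hβa : ∀ k, 1 + β * a k ≠ 0)
include ha hβa

theorem sum_Icc_inv_mul_geomKernel_mul_geomBlock {b b' N d : ℕ} (hN : b' ≤ N) (hNd : N ≤ d) :
    ∑ m ∈ Icc b' N, (a m)⁻¹ * geomKernel a β m d * geomBlock a β b' b m
      = geomKernel a β b b' * (geomKernel a β N d * ((a N)⁻¹ + β)) := by
  induction N, hN using Nat.le_induction with
  | base =>
    simp only [Icc_self, sum_singleton, geomBlock, lt_irrefl, if_false, if_true]
    field_simp [ha b']
    ring
  | succ N hN ih =>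
    rw [sum_Icc_succ_top (by omega), ih (by omega),
      geomKernel_mul_inv_add (by omega) (ha N) (hβa N)]
    simp only [geomBlock, if_pos (show b' < N + 1 by omega), if_neg (show b' ≠ N + 1 by omega)]
    ring

theorem sum_inv_mul_geomKernel_mul_geomBlock_mul_geomPush {b b' c c' d : ℕ}
    (hb'c : b' < c) (hb'd : b' ≤ d) (hdc' : d < c') :
    ∑ m ∈ (Icc b' d).filter (· < c),
        (a m)⁻¹ * geomKernel a β m d * geomBlock a β b' b m * geomPush a β c' c d
      = (a d)⁻¹ * geomKernel a β b b' * geomKernel a β c c' := by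
  rw [← sum_mul]
  rcases lt_or_ge d c with hdc | hcd
  · have hrange : (Icc b' d).filter (· < c) = Icc b' d := by
      ext m; simp only [mem_filter, mem_Icc]; omega
    rw [hrange, sum_Icc_inv_mul_geomKernel_mul_geomBlock ha hβa hb'd le_rfl,
      geomKernel_self_mul_inv_add (ha d) (hβa d)]
    simp only [geomPush, if_pos hdc, if_neg (show ¬c ≤ d by omega)]
    ring
  · obtain ⟨n, rfl⟩ : ∃ n, c = n + 1 := ⟨c - 1, by omega⟩
    have hrange : (Icc b' d).filter (· < n + 1) = Icc b' n := by
      ext m; simp only [mem_filter, mem_Icc]; omega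
    rw [hrange, sum_Icc_inv_mul_geomKernel_mul_geomBlock ha hβa (by omega) (by omega),
      geomKernel_mul_inv_add (by omega) (ha n) (hβa n),
      geomKernel_eq_mul_mul (m := d) hcd hdc' (hβa d)]
    simp only [geomPush, if_neg (show ¬d < n + 1 by omega), if_pos hcd,
      mul_zero, zero_add, mul_one]
    field_simp [ha d]

end GeometricKernel

theorem stmt19_general (a : ℕ → ℝ) (hpos : ∀ k, 0 < a k) (β : ℝ) (hβ : 0 ≤ β)
    (T : ℕ → ℕ → ℝ)
    (hT : ∀ x y, T x y =
      if x ≤ y then (1 + β * a y)⁻¹ * ∏ k ∈ Finset.Ico x y, (β * a k / (1 + β * a k)) else 0)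
    (Blk Psh : ℕ → ℕ → ℕ → ℝ)
    (hBlk : ∀ y' y x, Blk y' y x =
      T y y' * ((if y' < x then (1 : ℝ) else 0) + (1 + β * a y') * (if y' = x then 1 else 0)))
    (hPsh : ∀ y' y x', Psh y' y x' =
      T y y' * (if x' < y then (1 : ℝ) else 0) + T (x' + 1) y' * (if y ≤ x' then 1 else 0))
    (b b' c c' d : ℕ) :
    (b ≤ b' → b' < c → c ≤ c' → b' ≤ d → d < c' →
        ∑ m ∈ (Finset.Icc b' d).filter (fun m => m < c),
            (a m)⁻¹ * T m d * Blk b' b m * Psh c' c d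
          = (a d)⁻¹ * T b b' * T c c') ∧
      (¬(b ≤ b' ∧ b' < c ∧ c ≤ c' ∧ b' ≤ d ∧ d < c') →
        ∑ m ∈ (Finset.Icc b' d).filter (fun m => m < c),
            (a m)⁻¹ * T m d * Blk b' b m * Psh c' c d
          = 0) := by
  obtain rfl : T = geomKernel a β := funext₂ hT
  obtain rfl : Blk = geomBlock a β := funext₃ hBlk
  obtain rfl : Psh = geomPush a β := funext₃ hPsh
  have ha : ∀ k, a k ≠ 0 := fun k => (hpos k).ne'
  have hβa : ∀ k, 1 + β * a k ≠ 0 := fun k =>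
    (add_pos_of_pos_of_nonneg one_pos (mul_nonneg hβ (hpos k).le)).ne'
  refine ⟨fun _ hb'c _ hb'd hdc' =>
    sum_inv_mul_geomKernel_mul_geomBlock_mul_geomPush ha hβa hb'c hb'd hdc', fun h => ?_⟩
  refine sum_eq_zero fun m hm => ?_
  rw [mem_filter, mem_Icc] at hm
  by_cases hbb' : b ≤ b'
  · rw [geomPush_eq_zero (by omega), mul_zero]
  · rw [geomBlock_of_lt (by omega), mul_zero, zero_mul]

/-- The key summation identity behind the intertwining of the Warren-Windridge
geometric dynamics (Proposition KeyComputationGeometric). -/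
theorem stmt19 (a : ℕ → ℝ) (hpos : ∀ k, 0 < a k) (ε M : ℝ) (hε : 0 < ε)
    (hlb : ∀ k, ε ≤ a k) (hub : ∀ k, a k ≤ M) (β : ℝ) (hβ : 0 ≤ β)
    (T : ℕ → ℕ → ℝ)
    (hT : ∀ x y, T x y =
      if x ≤ y then (1 + β * a y)⁻¹ * ∏ k ∈ Finset.Ico x y, (β * a k / (1 + β * a k)) else 0)
    (Blk Psh : ℕ → ℕ → ℕ → ℝ)
    (hBlk : ∀ y' y x, Blk y' y x =
      T y y' * ((if y' < x then (1 : ℝ) else 0) + (1 + β * a y') * (if y' = x then 1 else 0)))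
    (hPsh : ∀ y' y x', Psh y' y x' =
      T y y' * (if x' < y then (1 : ℝ) else 0) + T (x' + 1) y' * (if y ≤ x' then 1 else 0))
    (b b' c c' d : ℕ) :
    (b ≤ b' → b' < c → c ≤ c' → b' ≤ d → d < c' →
        ∑ m ∈ (Finset.Icc b' d).filter (fun m => m < c),
            (a m)⁻¹ * T m d * Blk b' b m * Psh c' c d
          = (a d)⁻¹ * T b b' * T c c') ∧
      (¬(b ≤ b' ∧ b' < c ∧ c ≤ c' ∧ b' ≤ d ∧ d < c') →
        ∑ m ∈ (Finset.Icc b' d).filter (fun m => m < c),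
            (a m)⁻¹ * T m d * Blk b' b m * Psh c' c d
          = 0) :=
  stmt19_general a hpos β hβ T hT Blk Psh hBlk hPsh b b' c c' d
end
end
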